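/- arXiv:2105.11971 — 4 statements merged into one kernel-verified Lean document; each statement's English description precedes it below -/
import Mathlib

section
/- Let K be a field with algebraic closure K̄, and let f, g ∈ K[X] be polynomials each of positive degree. Then the resultant Res(f, g) (the determinant of the Sylvester matrix of f and g) equals 0 if and only if f and g have a common root in K̄. -/
open Polynomial

/-- The Sylvester matrix of two polynomials `f` and `g` over a commutative ring:
a `(natDegree f + natDegree g) × (natDegree f + natDegree g)` matrix, whose first
`natDegree g` rows carry the shifted coefficient sequences of `f` (from the leading
coefficient down), and whose remaining `natDegree f` rows carry the shifted
coefficient sequences of `g`. -/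
noncomputable def sylvesterMatrix {R : Type*} [CommRing R] (f g : Polynomial R) :
    Matrix (Fin (f.natDegree + g.natDegree)) (Fin (f.natDegree + g.natDegree)) R :=
  Matrix.of fun i j =>
    if (i : ℕ) < g.natDegree then
      if (i : ℕ) ≤ (j : ℕ) ∧ (j : ℕ) ≤ (i : ℕ) + f.natDegree then
        f.coeff (f.natDegree + i - j)
      else 0
    else
      if (i : ℕ) - g.natDegree ≤ (j : ℕ) ∧ (j : ℕ) ≤ ((i : ℕ) - g.natDegree) + g.natDegree then
        g.coeff (g.natDegree + ((i : ℕ) - g.natDegree) - j)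
      else 0

/-- The resultant of two polynomials: the determinant of their Sylvester matrix. -/
noncomputable def resultant {R : Type*} [CommRing R] (f g : Polynomial R) : R :=
  (sylvesterMatrix f g).det

/-! Reversing the order of both rows and columns of the transposed `sylvesterMatrix f g` gives
Mathlib's `Polynomial.sylvester f g`, so the two resultants coincide. Over a field, Mathlib's
resultant vanishes exactly when `f` and `g` are not coprime, and over an
algebraically closed extension non-coprimality means a common root. -/

section

open Matrix

theorem sylvesterMatrix_eq_transpose_submatrix_rev {R : Type*} [CommRing R] (f g : R[X]) :
    sylvesterMatrix f g =
      ((Polynomial.sylvester f g f.natDegree g.natDegree).submatrix Fin.rev Fin.rev)ᵀ := by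
  ext i j
  obtain ⟨i, rfl⟩ := Fin.rev_surjective i
  induction i using Fin.addCases with
  | left c =>
    simp only [sylvesterMatrix, sylvester, transpose_apply, submatrix_apply, of_apply, Fin.rev_rev,
      Fin.addCases_left, Fin.val_rev, Fin.val_castAdd, Set.mem_Icc]
    split_ifs <;> first | omega | congr 1 <;> omega
  | right c =>
    simp only [sylvesterMatrix, sylvester, transpose_apply, submatrix_apply, of_apply, Fin.rev_rev,
      Fin.addCases_right, Fin.val_rev, Fin.val_natAdd, Set.mem_Icc]
    split_ifs <;> first | omega | congr 1 <;> omega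

theorem resultant_eq_polynomial_resultant {R : Type*} [CommRing R] (f g : R[X]) :
    _root_.resultant f g = Polynomial.resultant f g := by
  rw [_root_.resultant, Polynomial.resultant, sylvesterMatrix_eq_transpose_submatrix_rev,
    det_transpose]
  exact det_submatrix_equiv_self Fin.revPerm _

end

theorem resultant_eq_zero_iff_common_root_general {K : Type*} [Field K] (f g : Polynomial K)
    (hf : 0 < f.natDegree) :
    _root_.resultant f g = 0 ↔
      ∃ x : AlgebraicClosure K, aeval x f = 0 ∧ aeval x g = 0 := by
  have hf0 : f ≠ 0 := ne_zero_of_natDegree_gt hf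
  rw [resultant_eq_polynomial_resultant, Polynomial.resultant_eq_zero_iff,
    isCoprime_iff_aeval_ne_zero_of_isAlgClosed K (AlgebraicClosure K)]
  simp [hf0]

/-- For polynomials of positive degree over a field, the resultant vanishes iff the two
polynomials have a common root in the algebraic closure. -/
theorem resultant_eq_zero_iff_common_root {K : Type*} [Field K] (f g : Polynomial K)
    (hf : 0 < f.natDegree) (hg : 0 < g.natDegree) :
    _root_.resultant f g = 0 ↔
      ∃ x : AlgebraicClosure K, aeval x f = 0 ∧ aeval x g = 0 :=
  resultant_eq_zero_iff_common_root_general f g hf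
end

section
/- Let R and S be commutative rings, φ : R → S a ring homomorphism, and f, g ∈ R[X] nonzero polynomials such that φ(leadingCoeff f) ≠ 0 and φ(leadingCoeff g) ≠ 0 (equivalently, the maps of f and g under φ have the same degrees as f and g). Then Res(map φ f, map φ g) = φ(Res(f, g)). -/
open Polynomial

theorem sylvesterMatrix_map {R S : Type*} [CommRing R] [CommRing S] (φ : R →+* S)
    {f g : R[X]} (hf : (f.map φ).natDegree = f.natDegree)
    (hg : (g.map φ).natDegree = g.natDegree) :
    sylvesterMatrix (f.map φ) (g.map φ) =
      Matrix.reindex (finCongr (by rw [hf, hg])) (finCongr (by rw [hf, hg]))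
        ((sylvesterMatrix f g).map φ) := by
  ext i j
  simp only [sylvesterMatrix, Matrix.reindex_apply, Matrix.submatrix_apply, Matrix.map_apply,
    Matrix.of_apply, finCongr_symm, finCongr_apply, Fin.val_cast, hf, hg, coeff_map]
  split_ifs <;> simp

theorem resultant_map_of_natDegree_eq {R S : Type*} [CommRing R] [CommRing S] (φ : R →+* S)
    {f g : R[X]} (hf : (f.map φ).natDegree = f.natDegree)
    (hg : (g.map φ).natDegree = g.natDegree) :
    _root_.resultant (f.map φ) (g.map φ) = φ (_root_.resultant f g) := by
  rw [_root_.resultant, _root_.resultant, sylvesterMatrix_map φ hf hg, Matrix.det_reindex_self]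
  exact (RingHom.map_det φ _).symm

theorem resultant_map_general {R S : Type*} [CommRing R] [CommRing S] (φ : R →+* S)
    (f g : Polynomial R)
    (hlf : φ f.leadingCoeff ≠ 0) (hlg : φ g.leadingCoeff ≠ 0) :
    _root_.resultant (f.map φ) (g.map φ) = φ (_root_.resultant f g) :=
  resultant_map_of_natDegree_eq φ (natDegree_map_of_leadingCoeff_ne_zero φ hlf)
    (natDegree_map_of_leadingCoeff_ne_zero φ hlg)

/-- The resultant commutes with ring homomorphisms that do not kill the leading
coefficients. -/
theorem resultant_map {R S : Type*} [CommRing R] [CommRing S] (φ : R →+* S)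
    (f g : Polynomial R) (hf : f ≠ 0) (hg : g ≠ 0)
    (hlf : φ f.leadingCoeff ≠ 0) (hlg : φ g.leadingCoeff ≠ 0) :
    _root_.resultant (f.map φ) (g.map φ) = φ (_root_.resultant f g) :=
  resultant_map_general φ f g hlf hlg
end

section
/- Let p be a prime, d ≥ 1 an integer, and h ∈ F_p[T] a nonzero squarefree polynomial. Then the degree of gcd(h, T^{p^d} − T) in F_p[T] equals the number of elements a of the finite field GF(p^d) of order p^d with h(a) = 0 (where h is viewed in GF(p^d)[T] via the inclusion F_p ⊆ GF(p^d)). -/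
open Polynomial

/-! Over a field `L` with `q` elements every element is a root of `X ^ q - X`, which therefore
splits over `L` with simple roots. So `gcd (h, X ^ q - X)` splits over `L` with simple roots, and
these are the common roots of `h` and `X ^ q - X`, i.e. all roots of `h` in `L`. -/

theorem FiniteField.splits_X_pow_card_sub_X_self (L : Type*) [Field L] [Fintype L] :
    Splits (X ^ Fintype.card L - X : L[X]) := by
  rw [splits_iff_card_roots, FiniteField.roots_X_pow_card_sub_X,
    FiniteField.X_pow_card_sub_X_natDegree_eq L Fintype.one_lt_card]
  rfl

theorem FiniteField.separable_X_pow_card_sub_X (L : Type*) [Field L] [Fintype L] :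
    (X ^ Fintype.card L - X : L[X]).Separable := by
  rw [← nodup_roots_iff_of_splits (FiniteField.X_pow_card_sub_X_ne_zero L Fintype.one_lt_card)
    (FiniteField.splits_X_pow_card_sub_X_self L), FiniteField.roots_X_pow_card_sub_X]
  exact Finset.univ.nodup

theorem natDegree_eq_ncard_aeval_eq_zero_of_dvd_X_pow_card_sub_X {K L : Type*} [Field K]
    [Field L] [Finite L] [Algebra K L] {f : K[X]} (hf : f ∣ X ^ Nat.card L - X) :
    f.natDegree = {a : L | aeval a f = 0}.ncard := by
  have := Fintype.ofFinite L
  rw [Nat.card_eq_fintype_card] at hf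
  have hf₀ : f ≠ 0 := ne_zero_of_dvd_ne_zero
    (FiniteField.X_pow_card_sub_X_ne_zero K Fintype.one_lt_card) hf
  have hmap : f.map (algebraMap K L) ∣ X ^ Fintype.card L - X := by
    simpa using Polynomial.map_dvd (algebraMap K L) hf
  have hroots : {a : L | aeval a f = 0} = f.rootSet L := by
    ext a
    exact (mem_rootSet_of_ne hf₀).symm
  rw [hroots, ← Nat.card_coe_set_eq, Nat.card_eq_fintype_card]
  refine (card_rootSet_eq_natDegree ?_ ?_).symm
  · exact (separable_map _).mp ((FiniteField.separable_X_pow_card_sub_X L).of_dvd hmap)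
  · exact (FiniteField.splits_X_pow_card_sub_X_self L).of_dvd
      (FiniteField.X_pow_card_sub_X_ne_zero L Fintype.one_lt_card) hmap

theorem aeval_gcd_X_pow_card_sub_X_eq_zero_iff {K L : Type*} [Field K] [DecidableEq K] [Field L]
    [Finite L] [Algebra K L] (h : K[X]) (a : L) :
    aeval a (EuclideanDomain.gcd h (X ^ Nat.card L - X)) = 0 ↔ aeval a h = 0 := by
  have := Fintype.ofFinite L
  have hfrob : aeval a (X ^ Nat.card L - X : K[X]) = 0 := by
    simpa [sub_eq_zero, Nat.card_eq_fintype_card] using FiniteField.pow_card a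
  rw [aeval_def, aeval_def, root_gcd_iff_root_left_right, ← aeval_def, ← aeval_def, hfrob]
  exact and_iff_left rfl

theorem natDegree_gcd_frobenius_eq_card_roots_general (p d : ℕ) [Fact p.Prime] (hd : 1 ≤ d)
    (h : Polynomial (ZMod p)) :
    (EuclideanDomain.gcd h (X ^ p ^ d - X)).natDegree =
      {a : GaloisField p d | aeval a h = 0}.ncard := by
  rw [← GaloisField.card p d (by omega), ← Set.ext (aeval_gcd_X_pow_card_sub_X_eq_zero_iff h)]
  exact natDegree_eq_ncard_aeval_eq_zero_of_dvd_X_pow_card_sub_X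
    (EuclideanDomain.gcd_dvd_right _ _)

/-- For a nonzero squarefree polynomial `h ∈ F_p[T]`, the degree of
`gcd (h, T^(p^d) − T)` equals the number of roots of `h` in the Galois field
of order `p^d`. -/
theorem natDegree_gcd_frobenius_eq_card_roots (p d : ℕ) [Fact p.Prime] (hd : 1 ≤ d)
    (h : Polynomial (ZMod p)) (hne : h ≠ 0) (hsq : Squarefree h) :
    (EuclideanDomain.gcd h (X ^ p ^ d - X)).natDegree =
      {a : GaloisField p d | aeval a h = 0}.ncard :=
  natDegree_gcd_frobenius_eq_card_roots_general p d hd h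
end

section
/- Let K be a field and let f, g be nonzero polynomials in x over the polynomial ring K[t], of degrees d_f ≥ 1 and d_g ≥ 1 in x, and set D := d_f + d_g. If every coefficient of f and of g (each an element of K[t]) has at most L nonzero terms (i.e., its support has cardinality at most L), then the resultant Res_x(f, g) ∈ K[t] has at most D!·L^D nonzero terms. -/
open Polynomial

namespace Polynomial

variable {R ι : Type*}

theorem card_support_add_le [Semiring R] (p q : R[X]) :
    (p + q).support.card ≤ p.support.card + q.support.card :=
  (Finset.card_le_card support_add).trans (Finset.card_union_le _ _)

theorem card_support_sum_le [Semiring R] (s : Finset ι) (p : ι → R[X]) :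
    (∑ i ∈ s, p i).support.card ≤ ∑ i ∈ s, (p i).support.card := by
  classical
  induction s using Finset.induction_on with
  | empty => simp
  | insert a s ha ih =>
    rw [Finset.sum_insert ha, Finset.sum_insert ha]
    exact (card_support_add_le _ _).trans (Nat.add_le_add_left ih _)

theorem card_support_prod_le [CommSemiring R] (s : Finset ι) (p : ι → R[X]) :
    (∏ i ∈ s, p i).support.card ≤ ∏ i ∈ s, (p i).support.card := by
  classical
  induction s using Finset.induction_on with
  | empty => exact card_support_le_one_iff_monomial.mpr ⟨0, 1, rfl⟩
  | insert a s ha ih =>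
    rw [Finset.prod_insert ha, Finset.prod_insert ha]
    exact card_support_mul_le.trans (Nat.mul_le_mul_left _ ih)

end Polynomial

theorem Matrix.card_support_det_le {n R : Type*} [Fintype n] [DecidableEq n] [CommRing R]
    (M : Matrix n n R[X]) {L : ℕ} (hM : ∀ i j, (M i j).support.card ≤ L) :
    M.det.support.card ≤ (Fintype.card n).factorial * L ^ Fintype.card n := by
  have hterm : ∀ σ : Equiv.Perm n,
      (Equiv.Perm.sign σ • ∏ i, M (σ i) i).support.card ≤ L ^ Fintype.card n := fun σ =>
    calc (Equiv.Perm.sign σ • ∏ i, M (σ i) i).support.card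
        ≤ (∏ i, M (σ i) i).support.card := Finset.card_le_card (support_smul _ _)
      _ ≤ ∏ i, (M (σ i) i).support.card := card_support_prod_le _ _
      _ ≤ L ^ Fintype.card n := Finset.prod_le_pow_card _ _ _ fun i _ => hM _ _
  calc M.det.support.card
      ≤ ∑ σ : Equiv.Perm n, (Equiv.Perm.sign σ • ∏ i, M (σ i) i).support.card := by
        rw [Matrix.det_apply]; exact card_support_sum_le _ _
    _ ≤ (Fintype.card n).factorial * L ^ Fintype.card n := by
        simpa [Fintype.card_perm] using Finset.sum_le_card_nsmul Finset.univ _ _ fun σ _ => hterm σ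

theorem card_support_sylvesterMatrix_le {R : Type*} [CommRing R] {f g : R[X][X]} {L : ℕ}
    (hf : ∀ i, (f.coeff i).support.card ≤ L) (hg : ∀ i, (g.coeff i).support.card ≤ L)
    (i j : Fin (f.natDegree + g.natDegree)) :
    (sylvesterMatrix f g i j).support.card ≤ L := by
  unfold sylvesterMatrix
  simp only [Matrix.of_apply]
  split_ifs <;> simp [hf, hg]

theorem card_support_resultant_le_general {K : Type*} [Field K] (f g : Polynomial (Polynomial K))
    (L : ℕ)
    (hfc : ∀ i, (f.coeff i).support.card ≤ L)
    (hgc : ∀ i, (g.coeff i).support.card ≤ L) :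
    (_root_.resultant f g).support.card ≤
      Nat.factorial (f.natDegree + g.natDegree) * L ^ (f.natDegree + g.natDegree) := by
  simpa [_root_.resultant] using
    Matrix.card_support_det_le (sylvesterMatrix f g) (card_support_sylvesterMatrix_le hfc hgc)

/-- Sparsity bound for the resultant: if every coefficient of `f` and of `g` has at most
`L` nonzero terms, then with `D = d_f + d_g` the resultant has at most `D! · L^D`
nonzero terms. -/
theorem card_support_resultant_le {K : Type*} [Field K] (f g : Polynomial (Polynomial K))
    (L : ℕ) (hf : f ≠ 0) (hg : g ≠ 0) (hdf : 1 ≤ f.natDegree) (hdg : 1 ≤ g.natDegree)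
    (hfc : ∀ i, (f.coeff i).support.card ≤ L)
    (hgc : ∀ i, (g.coeff i).support.card ≤ L) :
    (_root_.resultant f g).support.card ≤
      Nat.factorial (f.natDegree + g.natDegree) * L ^ (f.natDegree + g.natDegree) :=
  card_support_resultant_le_general f g L hfc hgc
end
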